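/- arXiv:2102.01960 — 3 statements merged into one kernel-verified Lean document; each statement's English description precedes it below -/
import Mathlib

section
/- Let p(x) be a real polynomial of degree at most d with |p(x)| ≤ ε for all x in [-Δ, Δ], where 0 < Δ < 1 and ε > 0. Then |p(1)| ≤ ε·|T_d(1 + (1-Δ)/Δ)|, where T_d is the Chebyshev polynomial of the first kind of degree d. -/
/-!
Mathlib's extremal property of Chebyshev polynomials (the zeroth-derivative case of
`eval_iterate_derivative_le_of_forall_abs_le_one`) says that a polynomial of degree at most `n`
bounded by `1` on `[-1, 1]` stays below `T_n` on `[1, ∞)`; applied to `±P` it bounds `|P|`.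
Rescaling `[-Δ, Δ]` to `[-1, 1]` and dividing by `ε` turns the point `1` into `1 / Δ`.
-/

open Polynomial

namespace Polynomial.Chebyshev

theorem abs_eval_le_eval_T_of_forall_abs_le_one {n : ℕ} {P : ℝ[X]} {x : ℝ} (hx : 1 ≤ x)
    (hPdeg : P.degree ≤ n) (hPbnd : ∀ y ∈ Set.Icc (-1) 1, |P.eval y| ≤ 1) :
    |P.eval x| ≤ (T ℝ n).eval x := by
  have hle {Q : ℝ[X]} (hQdeg : Q.degree ≤ n) (hQbnd : ∀ y ∈ Set.Icc (-1) 1, |Q.eval y| ≤ 1) :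
      Q.eval x ≤ (T ℝ n).eval x :=
    eval_iterate_derivative_le_of_forall_abs_le_one (k := 0) hx hQdeg hQbnd
  refine abs_le.2 ⟨?_, hle hPdeg hPbnd⟩
  have := hle (Q := -P) (by rwa [degree_neg]) (by simpa only [eval_neg, abs_neg])
  rw [eval_neg] at this
  linarith

theorem abs_eval_le_mul_eval_T_div {n : ℕ} {p : ℝ[X]} {ε Δ x : ℝ} (hε : 0 < ε) (hΔ : 0 < Δ)
    (hx : Δ ≤ x) (hpdeg : p.natDegree ≤ n) (hpbnd : ∀ y ∈ Set.Icc (-Δ) Δ, |p.eval y| ≤ ε) :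
    |p.eval x| ≤ ε * (T ℝ n).eval (x / Δ) := by
  set P : ℝ[X] := Polynomial.C ε⁻¹ * p.comp (Polynomial.C Δ * X)
  have hP (y : ℝ) : P.eval y = ε⁻¹ * p.eval (Δ * y) := by simp [P]
  have hPdeg : P.degree ≤ n := by
    refine degree_le_of_natDegree_le ((natDegree_C_mul_le _ _).trans ?_)
    rw [natDegree_comp, natDegree_C_mul_X _ hΔ.ne', mul_one]
    exact hpdeg
  have hPbnd : ∀ y ∈ Set.Icc (-1) 1, |P.eval y| ≤ 1 := by
    rintro y ⟨hy₁, hy₂⟩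
    rw [hP, abs_mul, abs_inv, abs_of_pos hε, inv_mul_le_iff₀ hε, mul_one]
    exact hpbnd _ ⟨by nlinarith, by nlinarith⟩
  have := abs_eval_le_eval_T_of_forall_abs_le_one ((one_le_div hΔ).2 hx) hPdeg hPbnd
  rwa [hP, mul_div_cancel₀ _ hΔ.ne', abs_mul, abs_inv, abs_of_pos hε, inv_mul_le_iff₀ hε] at this

end Polynomial.Chebyshev

/-- Paturi's corollary: if a real polynomial of degree at most `d` satisfies
`|p(x)| ≤ ε` on `[-Δ, Δ]` with `0 < Δ < 1` and `ε > 0`, then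
`|p(1)| ≤ ε·|T_d(1 + (1-Δ)/Δ)|` where `T_d` is the Chebyshev polynomial
of the first kind of degree `d`. -/
theorem paturi_corollary (p : Polynomial ℝ) (d : ℕ) (ε Δ : ℝ)
    (hd : p.natDegree ≤ d) (hΔ0 : 0 < Δ) (hΔ1 : Δ < 1) (hε : 0 < ε)
    (hb : ∀ x ∈ Set.Icc (-Δ) Δ, |p.eval x| ≤ ε) :
    |p.eval 1| ≤ ε * |(Polynomial.Chebyshev.T ℝ d).eval (1 + (1 - Δ) / Δ)| := by
  have hpt : 1 + (1 - Δ) / Δ = 1 / Δ := by field_simp; ring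
  rw [hpt]
  calc |p.eval 1| ≤ ε * (Chebyshev.T ℝ d).eval (1 / Δ) :=
        Chebyshev.abs_eval_le_mul_eval_T_div hε hΔ0 hΔ1.le hd hb
    _ ≤ ε * |(Chebyshev.T ℝ d).eval (1 / Δ)| := by gcongr; exact le_abs_self _
end

section
/- Let p(x) be a real polynomial of degree at most d ≥ 1, let Δ ∈ (0,1), and let x_j = -Δ + (2j/d)·Δ for j = 0,1,...,d be d+1 equally spaced points in [-Δ, Δ]. If |p(x_j)| ≤ ε for all j, then |p(1)| < ε·exp(d(1 + log(1/Δ)))/√(2πd). -/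
open Polynomial Real

lemma prod_range_id_succ (n : ℕ) : ∏ j ∈ Finset.range n, (j + 1) = Nat.factorial n := by
  induction n with
  | zero => simp
  | succ n ih => rw [Finset.prod_range_succ, ih, Nat.factorial_succ, mul_comm]

lemma stirling_strict (d : ℕ) (hd : 1 ≤ d) :
    Real.sqrt (2 * π * d) * ((d : ℝ) / Real.exp 1) ^ d < (Nat.factorial d : ℝ) := by
  obtain ⟨m, rfl⟩ : ∃ m, d = m + 1 := ⟨d - 1, by omega⟩
  set n := m + 1 with hn
  have h1 : Real.sqrt π ≤ Stirling.stirlingSeq (n + 1) := by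
    refine le_of_tendsto Stirling.tendsto_stirlingSeq_sqrt_pi ?_
    filter_upwards [Filter.eventually_ge_atTop (n + 1)] with k hk
    obtain ⟨j, rfl⟩ := Nat.exists_eq_add_of_le hk
    have := Stirling.stirlingSeq'_antitone (Nat.le_add_right n j)
    simpa [Function.comp, Nat.succ_eq_add_one, Nat.add_right_comm n j 1] using this
  have h2 : Stirling.stirlingSeq (n + 1) < Stirling.stirlingSeq n := by
    have hsum := Stirling.log_stirlingSeq_diff_hasSum m
    have hpos : 0 < Real.log (Stirling.stirlingSeq (m + 1)) -
        Real.log (Stirling.stirlingSeq (m + 2)) := by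
      have h0 : (0:ℝ) < (1 : ℝ) / (2 * ((0:ℕ) + 1 : ℕ) + 1) *
          ((1 / (2 * ((m + 1 : ℕ) : ℝ) + 1)) ^ 2) ^ ((0:ℕ) + 1 : ℕ) := by positivity
      calc (0:ℝ) < _ := h0
        _ ≤ _ := le_hasSum hsum 0 (fun k _ => by positivity)
    have := sub_pos.mp hpos
    exact (Real.log_lt_log_iff (Stirling.stirlingSeq'_pos _) (Stirling.stirlingSeq'_pos m)).mp this
  have h3 : Real.sqrt π < Stirling.stirlingSeq n := lt_of_le_of_lt h1 h2
  have hX : (0:ℝ) < Real.sqrt (2 * n) * ((n : ℝ) / Real.exp 1) ^ n := by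
    have : (0:ℝ) < (n : ℝ) := by positivity
    positivity
  rw [Stirling.stirlingSeq, lt_div_iff₀ hX] at h3
  calc Real.sqrt (2 * π * n) * ((n : ℝ) / Real.exp 1) ^ n
      = Real.sqrt π * (Real.sqrt (2 * n) * ((n : ℝ) / Real.exp 1) ^ n) := by
        rw [show (2 * π * (n:ℝ)) = π * (2 * n) by ring, Real.sqrt_mul pi_pos.le]
        ring
    _ < (Nat.factorial n : ℝ) := h3


/-- Lagrange extrapolation bound with `d+1` equally-spaced nodes in `[-Δ, Δ]`:
if a real polynomial of degree at most `d ≥ 1` satisfies `|p(x_j)| ≤ ε` at the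
points `x_j = -Δ + (2j/d)Δ`, `j = 0, …, d`, with `Δ ∈ (0,1)`, then
`|p(1)| < ε·exp(d(1 + log(1/Δ)))/√(2πd)`. -/
theorem lagrange_extrapolation_equispaced (p : Polynomial ℝ) (d : ℕ) (ε Δ : ℝ)
    (hd1 : 1 ≤ d) (hd : p.natDegree ≤ d) (hΔ0 : 0 < Δ) (hΔ1 : Δ < 1) (hε : 0 < ε)
    (hb : ∀ j : ℕ, j ≤ d → |p.eval (-Δ + (2 * j / d) * Δ)| ≤ ε) :
    |p.eval 1| < ε * Real.exp (d * (1 + Real.log (1 / Δ))) / Real.sqrt (2 * π * d) := by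
  have hdR : (0:ℝ) < d := by exact_mod_cast hd1
  set v : ℕ → ℝ := fun j => -Δ + 2 * (j : ℝ) / (d : ℝ) * Δ with hv
  have hstep : (0:ℝ) < 2 * Δ / d := by positivity
  have hvdiff : ∀ i ℓ : ℕ, v i - v ℓ = 2 * Δ / d * ((i:ℝ) - ℓ) := by
    intro i ℓ; simp only [hv]; field_simp; ring
  have hinj : Set.InjOn v ↑(Finset.range (d+1)) := by
    intro a _ b _ hab
    have h0 : 2 * Δ / d * ((a:ℝ) - b) = 0 := by rw [← hvdiff]; simp [hab]
    have : (a:ℝ) - b = 0 := by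
      rcases mul_eq_zero.mp h0 with h | h
      · exact absurd h hstep.ne'
      · exact h
    have : (a:ℝ) = b := by linarith
    exact_mod_cast this
  have hvgt : ∀ ℓ : ℕ, -Δ ≤ v ℓ := by
    intro ℓ
    simp only [hv]
    have : 0 ≤ 2 * (ℓ:ℝ) / d * Δ := by positivity
    linarith
  have hvle : ∀ ℓ : ℕ, ℓ ≤ d → v ℓ ≤ Δ := by
    intro ℓ hℓ
    simp only [hv]
    have h1 : (ℓ:ℝ) ≤ d := by exact_mod_cast hℓ
    have : 2 * (ℓ:ℝ) / d * Δ ≤ 2 * Δ := by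
      rw [div_mul_eq_mul_div, div_le_iff₀ hdR]
      nlinarith
    linarith
  have h1v : ∀ ℓ : ℕ, ℓ ≤ d → 0 < 1 - v ℓ := by
    intro ℓ hℓ; have := hvle ℓ hℓ; linarith
  have hvneg : ∀ ℓ : ℕ, ℓ ≤ d → v (d - ℓ) = -v ℓ := by
    intro ℓ hℓ
    simp only [hv]
    rw [Nat.cast_sub hℓ]
    field_simp
    ring
  -- numerator bound
  have hnum : ∀ i ∈ Finset.range (d+1),
      ∏ ℓ ∈ (Finset.range (d+1)).erase i, (1 - v ℓ) ≤ 1 + v i := by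
    intro i hi
    rw [Finset.mem_range] at hi
    have hid : i ≤ d := by omega
    have hvi : 0 ≤ 1 + v i := by have := hvgt i; linarith
    set T := ((Finset.range (d+1)).erase i).erase (d - i) with hT
    have hTmem : ∀ ℓ, ℓ ∈ T ↔ ℓ ≤ d ∧ ℓ ≠ i ∧ ℓ ≠ d - i := by
      intro ℓ
      simp only [hT, Finset.mem_erase, Finset.mem_range]
      constructor
      · rintro ⟨h1, h2, h3⟩; exact ⟨by omega, h2, h1⟩
      · rintro ⟨h1, h2, h3⟩; exact ⟨h3, h2, by omega⟩
    have hTsub : ∀ ℓ ∈ T, ℓ ≤ d := fun ℓ hℓ => ((hTmem ℓ).mp hℓ).1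
    have hmapT : ∀ ℓ ∈ T, d - ℓ ∈ T := by
      intro ℓ hℓ
      obtain ⟨h1, h2, h3⟩ := (hTmem ℓ).mp hℓ
      exact (hTmem _).mpr ⟨by omega, by omega, by omega⟩
    have hinvT : ∀ ℓ ∈ T, d - (d - ℓ) = ℓ := by
      intro ℓ hℓ; have := hTsub ℓ hℓ; omega
    have hPQ : ∏ ℓ ∈ T, (1 - v ℓ) = ∏ ℓ ∈ T, (1 + v ℓ) := by
      refine Finset.prod_nbij' (fun ℓ => d - ℓ) (fun ℓ => d - ℓ) hmapT hmapT hinvT hinvT ?_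
      intro ℓ hℓ
      rw [hvneg ℓ (hTsub ℓ hℓ)]
      ring
    have hPpos : 0 < ∏ ℓ ∈ T, (1 - v ℓ) :=
      Finset.prod_pos fun ℓ hℓ => h1v ℓ (hTsub ℓ hℓ)
    have hPsq : (∏ ℓ ∈ T, (1 - v ℓ))^2 ≤ 1 := by
      have : (∏ ℓ ∈ T, (1 - v ℓ))^2 = ∏ ℓ ∈ T, ((1 - v ℓ) * (1 + v ℓ)) := by
        rw [sq, Finset.prod_mul_distrib, hPQ]
      rw [this]
      refine Finset.prod_le_one (fun ℓ hℓ => ?_) (fun ℓ hℓ => ?_)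
      · have h1 := hvle ℓ (hTsub ℓ hℓ); have h2 := hvgt ℓ; nlinarith
      · nlinarith [sq_nonneg (v ℓ)]
    have hPle : ∏ ℓ ∈ T, (1 - v ℓ) ≤ 1 := by nlinarith
    by_cases hcase : d - i = i
    · have hT' : T = (Finset.range (d+1)).erase i := by rw [hT, hcase, Finset.erase_idem]
      have hvi0 : v i = 0 := by
        have := hvneg i hid
        rw [hcase] at this
        linarith
      rw [← hT']
      rw [hvi0]
      linarith
    · have hdiMem : d - i ∈ (Finset.range (d+1)).erase i := by
        simp only [Finset.mem_erase, Finset.mem_range]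
        exact ⟨hcase, by omega⟩
      rw [← Finset.mul_prod_erase _ _ hdiMem, ← hT]
      have h1 : 1 - v (d - i) = 1 + v i := by rw [hvneg i hid]; ring
      rw [h1]
      nlinarith
  -- denominator product
  have hden : ∀ i ∈ Finset.range (d+1),
      ∏ ℓ ∈ (Finset.range (d+1)).erase i, |v i - v ℓ| =
        (2*Δ/d)^d * ((Nat.factorial i : ℝ) * (Nat.factorial (d - i) : ℝ)) := by
    intro i hi
    have hid : i ≤ d := by have := Finset.mem_range.mp hi; omega
    have h1 : ∀ ℓ ∈ (Finset.range (d+1)).erase i, |v i - v ℓ| = (2*Δ/d) * |(i:ℝ) - ℓ| := by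
      intro ℓ _
      rw [hvdiff, abs_mul, abs_of_pos hstep]
    rw [Finset.prod_congr rfl h1, Finset.prod_mul_distrib, Finset.prod_const,
      Finset.card_erase_of_mem hi, Finset.card_range]
    simp only [Nat.add_sub_cancel]
    congr 1
    have hsplit : (Finset.range (d+1)).erase i =
        Finset.range i ∪ Finset.Ico (i+1) (d+1) := by
      ext ℓ
      simp only [Finset.mem_erase, Finset.mem_range, Finset.mem_union, Finset.mem_Ico]
      omega
    have hdisj : Disjoint (Finset.range i) (Finset.Ico (i+1) (d+1)) := by
      rw [Finset.disjoint_left]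
      intro ℓ h1 h2
      simp only [Finset.mem_range] at h1
      simp only [Finset.mem_Ico] at h2
      omega
    rw [hsplit, Finset.prod_union hdisj]
    have hA : ∏ ℓ ∈ Finset.range i, |(i:ℝ) - ℓ| = (Nat.factorial i : ℝ) := by
      have h2 : ∀ ℓ ∈ Finset.range i, |(i:ℝ) - ℓ| = ((i - ℓ : ℕ) : ℝ) := by
        intro ℓ hℓ
        rw [Finset.mem_range] at hℓ
        rw [Nat.cast_sub hℓ.le, abs_of_pos]
        have : (ℓ:ℝ) < i := by exact_mod_cast hℓ
        linarith
      rw [Finset.prod_congr rfl h2, ← Nat.cast_prod]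
      congr 1
      rw [← Nat.descFactorial_eq_prod_range i i, Nat.descFactorial_self]
    have hB : ∏ ℓ ∈ Finset.Ico (i+1) (d+1), |(i:ℝ) - ℓ| = (Nat.factorial (d - i) : ℝ) := by
      have h2 : ∀ ℓ ∈ Finset.Ico (i+1) (d+1), |(i:ℝ) - ℓ| = ((ℓ - i : ℕ) : ℝ) := by
        intro ℓ hℓ
        rw [Finset.mem_Ico] at hℓ
        rw [Nat.cast_sub (by omega), abs_sub_comm, abs_of_pos]
        have : (i:ℝ) < ℓ := by exact_mod_cast hℓ.1
        linarith
      rw [Finset.prod_congr rfl h2, ← Nat.cast_prod]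
      congr 1
      rw [Finset.prod_Ico_eq_prod_range]
      have h3 : ∀ j ∈ Finset.range (d + 1 - (i + 1)), (i + 1 + j) - i = j + 1 := by
        intro j _; omega
      rw [Finset.prod_congr rfl h3, prod_range_id_succ]
      congr 1
      omega
    rw [hA, hB]
  -- interpolation representation
  have hdeg : p.degree < ((Finset.range (d+1)).card : WithBot ℕ) := by
    rw [Finset.card_range]
    calc p.degree ≤ (p.natDegree : WithBot ℕ) := Polynomial.degree_le_natDegree
      _ < ((d+1 : ℕ) : WithBot ℕ) := by exact_mod_cast Nat.lt_succ_of_le hd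
  have hrepr : p.eval 1 = ∑ i ∈ Finset.range (d+1),
      p.eval (v i) * (Lagrange.basis (Finset.range (d+1)) v i).eval 1 := by
    conv_lhs => rw [Lagrange.eq_interpolate hinj hdeg]
    rw [Lagrange.interpolate_apply, Polynomial.eval_finset_sum]
    refine Finset.sum_congr rfl fun i _ => ?_
    rw [Polynomial.eval_mul, Polynomial.eval_C]
  have hBabs : ∀ i ∈ Finset.range (d+1),
      |(Lagrange.basis (Finset.range (d+1)) v i).eval 1| =
      (∏ ℓ ∈ (Finset.range (d+1)).erase i, (1 - v ℓ)) /
        ∏ ℓ ∈ (Finset.range (d+1)).erase i, |v i - v ℓ| := by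
    intro i hi
    rw [Lagrange.basis, Polynomial.eval_prod, Finset.abs_prod, ← Finset.prod_div_distrib]
    refine Finset.prod_congr rfl fun ℓ hℓ => ?_
    have hℓd : ℓ ≤ d := by
      have := Finset.mem_range.mp (Finset.mem_erase.mp hℓ).2; omega
    simp only [Lagrange.basisDivisor, Polynomial.eval_mul, Polynomial.eval_C,
      Polynomial.eval_sub, Polynomial.eval_X]
    rw [abs_mul, abs_inv, abs_of_pos (h1v ℓ hℓd), inv_mul_eq_div]
  -- per-term bound
  have hterm : ∀ i ∈ Finset.range (d+1),
      |p.eval (v i)| * |(Lagrange.basis (Finset.range (d+1)) v i).eval 1| ≤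
      ε / ((2*Δ/d)^d * (Nat.factorial d : ℝ)) * ((d.choose i : ℝ) * (1 + v i)) := by
    intro i hi
    have hid : i ≤ d := by have := Finset.mem_range.mp hi; omega
    have hvi : 0 ≤ 1 + v i := by have := hvgt i; linarith
    have hBB : |(Lagrange.basis (Finset.range (d+1)) v i).eval 1| ≤
        (1 + v i) / ((2*Δ/d)^d * ((Nat.factorial i : ℝ) * (Nat.factorial (d-i) : ℝ))) := by
      rw [hBabs i hi, hden i hi]
      have hdenpos : (0:ℝ) < (2*Δ/d)^d * ((Nat.factorial i : ℝ) * (Nat.factorial (d-i) : ℝ)) := by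
        positivity
      exact (div_le_div_iff_of_pos_right hdenpos).mpr (hnum i hi)
    have hCF : (d.choose i : ℝ) * (Nat.factorial i : ℝ) * (Nat.factorial (d - i) : ℝ)
        = (Nat.factorial d : ℝ) := by
      exact_mod_cast Nat.choose_mul_factorial_mul_factorial hid
    have hEq : (1 + v i) / ((2*Δ/d)^d * ((Nat.factorial i : ℝ) * (Nat.factorial (d-i) : ℝ)))
        = 1 / ((2*Δ/d)^d * (Nat.factorial d : ℝ)) * ((d.choose i : ℝ) * (1 + v i)) := by
      rw [← hCF]
      have h1 : (0:ℝ) < (Nat.factorial i : ℝ) := by exact_mod_cast Nat.factorial_pos i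
      have h2 : (0:ℝ) < (Nat.factorial (d-i) : ℝ) := by exact_mod_cast Nat.factorial_pos (d-i)
      have h3 : (0:ℝ) < (d.choose i : ℝ) := by exact_mod_cast Nat.choose_pos hid
      have h4 : (0:ℝ) < (2*Δ/d)^d := by positivity
      field_simp
    calc |p.eval (v i)| * |(Lagrange.basis (Finset.range (d+1)) v i).eval 1|
        ≤ ε * ((1 + v i) / ((2*Δ/d)^d * ((Nat.factorial i : ℝ) * (Nat.factorial (d-i) : ℝ)))) :=
          mul_le_mul (hb i hid) hBB (abs_nonneg _) hε.le
      _ = ε * (1 / ((2*Δ/d)^d * (Nat.factorial d : ℝ)) * ((d.choose i : ℝ) * (1 + v i))) := by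
          rw [hEq]
      _ = ε / ((2*Δ/d)^d * (Nat.factorial d : ℝ)) * ((d.choose i : ℝ) * (1 + v i)) := by ring
  -- binomial sums
  have hsumCv : ∑ i ∈ Finset.range (d+1), (d.choose i : ℝ) * v i = 0 := by
    have hrefl := Finset.sum_range_reflect (fun j => (d.choose j : ℝ) * v j) (d+1)
    have hcongr : ∀ j ∈ Finset.range (d+1),
        (d.choose (d + 1 - 1 - j) : ℝ) * v (d + 1 - 1 - j) = -((d.choose j : ℝ) * v j) := by
      intro j hj
      have hjd : j ≤ d := by have := Finset.mem_range.mp hj; omega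
      have h1 : d + 1 - 1 - j = d - j := by omega
      rw [h1, Nat.choose_symm hjd, hvneg j hjd]
      ring
    rw [Finset.sum_congr rfl hcongr, Finset.sum_neg_distrib] at hrefl
    linarith
  have hsumC : ∑ i ∈ Finset.range (d+1), (d.choose i : ℝ) = 2^d := by
    have := Nat.sum_range_choose d
    exact_mod_cast congrArg (Nat.cast : ℕ → ℝ) this
  have hsumtot : ∑ i ∈ Finset.range (d+1), (d.choose i : ℝ) * (1 + v i) = 2^d := by
    have h1 : ∀ i ∈ Finset.range (d+1),
        (d.choose i : ℝ) * (1 + v i) = (d.choose i : ℝ) + (d.choose i : ℝ) * v i := by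
      intro i _; ring
    rw [Finset.sum_congr rfl h1, Finset.sum_add_distrib, hsumC, hsumCv, add_zero]
  -- key bound
  have key : |p.eval 1| ≤ ε / ((2*Δ/d)^d * (Nat.factorial d : ℝ)) * 2^d := by
    rw [hrepr]
    calc |∑ i ∈ Finset.range (d+1),
          p.eval (v i) * (Lagrange.basis (Finset.range (d+1)) v i).eval 1|
        ≤ ∑ i ∈ Finset.range (d+1),
          |p.eval (v i) * (Lagrange.basis (Finset.range (d+1)) v i).eval 1| :=
          Finset.abs_sum_le_sum_abs _ _
      _ = ∑ i ∈ Finset.range (d+1),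
          |p.eval (v i)| * |(Lagrange.basis (Finset.range (d+1)) v i).eval 1| := by
          refine Finset.sum_congr rfl fun i _ => ?_
          rw [abs_mul]
      _ ≤ ∑ i ∈ Finset.range (d+1),
          ε / ((2*Δ/d)^d * (Nat.factorial d : ℝ)) * ((d.choose i : ℝ) * (1 + v i)) :=
          Finset.sum_le_sum hterm
      _ = ε / ((2*Δ/d)^d * (Nat.factorial d : ℝ)) *
          ∑ i ∈ Finset.range (d+1), (d.choose i : ℝ) * (1 + v i) := by
          rw [← Finset.mul_sum]
      _ = ε / ((2*Δ/d)^d * (Nat.factorial d : ℝ)) * 2^d := by rw [hsumtot]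
  have hfpos : (0:ℝ) < (Nat.factorial d : ℝ) := by exact_mod_cast Nat.factorial_pos d
  have hkey2 : ε / ((2*Δ/d)^d * (Nat.factorial d : ℝ)) * 2^d
      = ε * ((d:ℝ)/Δ)^d / (Nat.factorial d : ℝ) := by
    have h2 : ((2:ℝ)*Δ/d)^d * ((d:ℝ)/Δ)^d = 2^d := by
      rw [← mul_pow]
      congr 1
      field_simp
    have hApos : (0:ℝ) < (2*Δ/d)^d := by positivity
    rw [← h2]
    field_simp
  -- final strict inequality
  have hstir := stirling_strict d hd1
  have hexp : Real.exp (d * (1 + Real.log (1 / Δ))) = (Real.exp 1 / Δ)^d := by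
    rw [Real.exp_nat_mul, Real.exp_add, Real.exp_log (by positivity : (0:ℝ) < 1/Δ),
      mul_one_div]
  have hsq : 0 < Real.sqrt (2*π*d) := Real.sqrt_pos.mpr (by positivity)
  have hlt : ε * ((d:ℝ)/Δ)^d / (Nat.factorial d : ℝ)
      < ε * Real.exp (d * (1 + Real.log (1 / Δ))) / Real.sqrt (2*π*d) := by
    rw [hexp, div_lt_div_iff₀ hfpos hsq]
    have hEΔ : (0:ℝ) < (Real.exp 1/Δ)^d := by positivity
    have hsplit : ((d:ℝ)/Δ)^d = ((d:ℝ)/Real.exp 1)^d * (Real.exp 1/Δ)^d := by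
      rw [← mul_pow]
      congr 1
      field_simp
    have hmain : ((d:ℝ)/Δ)^d * Real.sqrt (2*π*d)
        < (Real.exp 1/Δ)^d * (Nat.factorial d : ℝ) := by
      calc ((d:ℝ)/Δ)^d * Real.sqrt (2*π*d)
          = (Real.exp 1/Δ)^d * (Real.sqrt (2*π*d) * ((d:ℝ)/Real.exp 1)^d) := by
            rw [hsplit]; ring
        _ < (Real.exp 1/Δ)^d * (Nat.factorial d : ℝ) :=
            mul_lt_mul_of_pos_left hstir hEΔ
    calc ε * ((d:ℝ)/Δ)^d * Real.sqrt (2*π*d)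
        = ε * (((d:ℝ)/Δ)^d * Real.sqrt (2*π*d)) := by ring
      _ < ε * ((Real.exp 1/Δ)^d * (Nat.factorial d : ℝ)) := mul_lt_mul_of_pos_left hmain hε
      _ = ε * (Real.exp 1/Δ)^d * (Nat.factorial d : ℝ) := by ring
  calc |p.eval 1| ≤ ε / ((2*Δ/d)^d * (Nat.factorial d : ℝ)) * 2^d := key
    _ = ε * ((d:ℝ)/Δ)^d / (Nat.factorial d : ℝ) := hkey2
    _ < _ := hlt
end

section
/- Let p(x) be a real polynomial of degree at most d ≥ 1, let L ≥ d+1 be an integer, let Δ ∈ (0,1), and let a_0 < a_1 < ... < a_d be integers in {0,...,L-1}. Set x_j = -Δ + (2a_j/(L-1))·Δ. If |p(x_j)| ≤ ε for all j = 0,...,d, then |p(1)| ≤ ε·exp(d(1 + log((1+1/Δ)·(L-1)/d)))/√(2πd). -/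
/-! Lagrange interpolation at the nodes `x_j` gives
`p(1) = ∑ᵢ p(xᵢ) ∏_{j ≠ i} (1 - x_j) / (xᵢ - x_j)`. Consecutive nodes are at least
`h = 2Δ/(L-1)` apart, so `|xᵢ - x_j| ≥ h |i - j|`, and every node lies within `1 + Δ` of `1`;
hence the `i`-th term is at most `ε ((1+Δ)/h)^d / (i! (d-i)!)`, and summing over `i` gives
`ε (2(1+Δ)/h)^d / d!`. Stirling's bound `d! ≥ √(2πd) (d/e)^d` turns this into the stated
exponential. -/

open Polynomial Real

open Finset Nat

theorem Lagrange.eval_eq_sum_mul_prod {F ι : Type*} [Field F] [DecidableEq ι] {s : Finset ι}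
    {v : ι → F} {p : F[X]} (hvs : Set.InjOn v s) (hp : p.degree < #s) (t : F) :
    p.eval t = ∑ i ∈ s, p.eval (v i) * ∏ j ∈ s.erase i, (t - v j) / (v i - v j) := by
  conv_lhs => rw [Lagrange.eq_interpolate hvs hp, Lagrange.interpolate_apply]
  simp only [eval_finsetSum, eval_mul, eval_C, Lagrange.basis, eval_prod,
    Lagrange.basisDivisor, eval_X, eval_sub, div_eq_inv_mul]

theorem prod_erase_range_abs_natCast_sub {i d : ℕ} (hi : i ≤ d) :
    ∏ j ∈ (range (d + 1)).erase i, |(i : ℝ) - j| = i ! * (d - i)! := by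
  have hsplit : (range (d + 1)).erase i = range i ∪ Ico (i + 1) (d + 1) := by
    ext j; simp only [mem_erase, mem_range, mem_union, mem_Ico]; omega
  have hdisj : Disjoint (range i) (Ico (i + 1) (d + 1)) :=
    disjoint_left.2 fun j hj hj' => by simp only [mem_range, mem_Ico] at hj hj'; omega
  rw [hsplit, prod_union hdisj]
  congr 1
  · rw [← descFactorial_self, descFactorial_eq_prod_range, cast_prod]
    refine prod_congr rfl fun j hj => ?_
    rw [mem_range] at hj
    rw [cast_sub hj.le, abs_of_pos (by rw [sub_pos]; exact_mod_cast hj)]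
  · rw [prod_Ico_eq_prod_range, ← prod_range_add_one_eq_factorial, cast_prod,
      show d + 1 - (i + 1) = d - i by omega]
    refine prod_congr rfl fun k _ => ?_
    push_cast
    rw [abs_of_neg (by linarith)]
    ring

theorem sum_range_inv_factorial_mul_factorial (d : ℕ) :
    ∑ i ∈ range (d + 1), ((i ! * (d - i)! : ℕ) : ℝ)⁻¹ = 2 ^ d / d ! := by
  have hchoose : ∀ i ∈ range (d + 1), ((i ! * (d - i)! : ℕ) : ℝ)⁻¹ = d.choose i / d ! := by
    intro i hi
    rw [Nat.choose_eq_factorial_div_factorial (mem_range_succ_iff.1 hi),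
      Nat.cast_div (factorial_mul_factorial_dvd_factorial (mem_range_succ_iff.1 hi))
        (by positivity)]
    field_simp
  rw [sum_congr rfl hchoose, ← sum_div, ← cast_sum, sum_range_choose, cast_pow, cast_two]

theorem prod_abs_lagrange_factor_le {x : ℕ → ℝ} {d i : ℕ} {h B t : ℝ} (hh : 0 < h) (hi : i ≤ d)
    (hsep : ∀ j ≤ d, h * |(i : ℝ) - j| ≤ |x i - x j|) (hB : ∀ j ≤ d, |t - x j| ≤ B) :
    ∏ j ∈ (range (d + 1)).erase i, |t - x j| / |x i - x j| ≤
      (B / h) ^ d * ((i ! * (d - i)! : ℕ) : ℝ)⁻¹ := by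
  have hfactor : ∀ j ∈ (range (d + 1)).erase i,
      |t - x j| / |x i - x j| ≤ B / (h * |(i : ℝ) - j|) := by
    intro j hj
    obtain ⟨hji, hjd⟩ := mem_erase.1 hj
    have hdist : 0 < |(i : ℝ) - j| := abs_pos.2 (sub_ne_zero.2 (by exact_mod_cast hji.symm))
    exact div_le_div₀ ((abs_nonneg _).trans (hB j (mem_range_succ_iff.1 hjd)))
      (hB j (mem_range_succ_iff.1 hjd)) (by positivity) (hsep j (mem_range_succ_iff.1 hjd))
  have hcard : #((range (d + 1)).erase i) = d := by
    rw [card_erase_of_mem (mem_range_succ_iff.2 hi), card_range]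
    omega
  calc ∏ j ∈ (range (d + 1)).erase i, |t - x j| / |x i - x j|
      ≤ ∏ j ∈ (range (d + 1)).erase i, B / (h * |(i : ℝ) - j|) :=
        prod_le_prod (fun _ _ => by positivity) hfactor
    _ = (B / h) ^ d * ((i ! * (d - i)! : ℕ) : ℝ)⁻¹ := by
        rw [prod_div_distrib, prod_mul_distrib, prod_const, prod_const, hcard,
          prod_erase_range_abs_natCast_sub hi, div_pow]
        push_cast
        field_simp

theorem abs_eval_le_of_abs_eval_nodes_le {p : ℝ[X]} {d : ℕ} (hp : p.natDegree ≤ d)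
    {x : ℕ → ℝ} {h B ε t : ℝ} (hh : 0 < h)
    (hsep : ∀ i ≤ d, ∀ j ≤ d, h * |(i : ℝ) - j| ≤ |x i - x j|)
    (hB : ∀ j ≤ d, |t - x j| ≤ B) (hε : ∀ j ≤ d, |p.eval (x j)| ≤ ε) :
    |p.eval t| ≤ ε * (2 * B / h) ^ d / d ! := by
  have hinj : Set.InjOn x (range (d + 1)) := by
    intro i hi j hj hij
    simp only [coe_range, Set.mem_Iio, Nat.lt_succ_iff] at hi hj
    have hle := hsep i hi j hj
    rw [hij, sub_self, abs_zero] at hle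
    have hdist : |(i : ℝ) - j| = 0 :=
      le_antisymm (nonpos_of_mul_nonpos_right hle hh) (abs_nonneg _)
    exact_mod_cast sub_eq_zero.1 (abs_eq_zero.1 hdist)
  have hdeg : p.degree < #(range (d + 1)) := by
    rw [card_range]
    exact (degree_le_of_natDegree_le hp).trans_lt (WithBot.coe_lt_coe.2 (lt_add_one d))
  rw [Lagrange.eval_eq_sum_mul_prod hinj hdeg]
  calc _ ≤ ∑ i ∈ range (d + 1), |p.eval (x i)| *
          ∏ j ∈ (range (d + 1)).erase i, |t - x j| / |x i - x j| := by
        refine (abs_sum_le_sum_abs _ _).trans_eq (sum_congr rfl fun i _ => ?_)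
        simp only [abs_mul, abs_prod, abs_div]
    _ ≤ ∑ i ∈ range (d + 1), ε * ((B / h) ^ d * ((i ! * (d - i)! : ℕ) : ℝ)⁻¹) := by
        refine sum_le_sum fun i hi => ?_
        have hi := mem_range_succ_iff.1 hi
        exact mul_le_mul (hε i hi) (prod_abs_lagrange_factor_le hh hi (hsep i hi) hB)
          (prod_nonneg fun _ _ => by positivity) ((abs_nonneg _).trans (hε i hi))
    _ = ε * (2 * B / h) ^ d / d ! := by
        rw [← mul_sum, ← mul_sum, sum_range_inv_factorial_mul_factorial]
        ring

theorem pow_div_factorial_le_exp {M : ℝ} (hM : 0 < M) {d : ℕ} (hd : 1 ≤ d) :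
    M ^ d / d ! ≤ Real.exp (d * (1 + Real.log (M / d))) / Real.sqrt (2 * π * d) := by
  have hd0 : (0 : ℝ) < d := by exact_mod_cast hd
  have hexp : Real.exp (d * (1 + Real.log (M / d))) = M ^ d / (d / Real.exp 1) ^ d := by
    rw [mul_add, mul_one, Real.exp_add, Real.exp_nat_mul, Real.exp_log (by positivity),
      ← Real.exp_one_rpow, Real.rpow_natCast, div_pow, div_pow]
    field_simp
  rw [hexp, div_div, mul_comm]
  exact div_le_div_of_nonneg_left (by positivity) (by positivity)
    (Stirling.le_factorial_stirling d)

theorem StrictMonoOn.add_le_nat {a : ℕ → ℕ} {d : ℕ} (ha : StrictMonoOn a (Set.Iic d)) {i : ℕ} :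
    ∀ {k : ℕ}, i + k ≤ d → a i + k ≤ a (i + k)
  | 0, _ => le_rfl
  | k + 1, hk => by
    have hstep := ha (Set.mem_Iic.2 (by omega) : i + k ∈ Set.Iic d)
      (Set.mem_Iic.2 hk : i + (k + 1) ∈ Set.Iic d) (by omega)
    have hprev := ha.add_le_nat (i := i) (k := k) (by omega)
    omega

theorem StrictMonoOn.le_apply_nat {a : ℕ → ℕ} {d : ℕ} (ha : StrictMonoOn a (Set.Iic d)) {k : ℕ}
    (hk : k ≤ d) : k ≤ a k := by
  have hgap := ha.add_le_nat (i := 0) (k := k) (by omega)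
  rw [zero_add] at hgap
  omega

theorem StrictMonoOn.abs_natCast_sub_le {a : ℕ → ℕ} {d : ℕ} (ha : StrictMonoOn a (Set.Iic d))
    {i j : ℕ} (hi : i ≤ d) (hj : j ≤ d) : |(i : ℝ) - j| ≤ |(a i : ℝ) - a j| := by
  wlog hij : i ≤ j generalizing i j
  · rw [abs_sub_comm, abs_sub_comm (a i : ℝ)]
    exact this hj hi (by omega)
  obtain ⟨k, rfl⟩ := Nat.exists_eq_add_of_le hij
  have hgap : ((a i + k : ℕ) : ℝ) ≤ a (i + k) := by exact_mod_cast ha.add_le_nat hj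
  push_cast at hgap ⊢
  rw [abs_sub_comm, abs_sub_comm (a i : ℝ), add_sub_cancel_left, abs_of_nonneg (by positivity)]
  exact le_abs.2 (Or.inl (by linarith))

theorem abs_one_sub_neg_add_mul_le {Δ s : ℝ} (hΔ : 0 ≤ Δ) (hs0 : 0 ≤ s) (hs2 : s ≤ 2) :
    |1 - (-Δ + s * Δ)| ≤ 1 + Δ := by
  rw [abs_le]
  constructor <;> nlinarith

theorem lagrange_extrapolation_subset_general (p : Polynomial ℝ) (d L : ℕ) (ε Δ : ℝ)
    (a : ℕ → ℕ)
    (hd1 : 1 ≤ d) (hd : p.natDegree ≤ d)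
    (hΔ0 : 0 < Δ)
    (ha : StrictMonoOn a (Set.Iic d)) (haL : ∀ j ≤ d, a j ≤ L - 1)
    (hb : ∀ j : ℕ, j ≤ d → |p.eval (-Δ + (2 * (a j) / (L - 1 : ℝ)) * Δ)| ≤ ε) :
    |p.eval 1| ≤
      ε * Real.exp (d * (1 + Real.log ((1 + 1 / Δ) * (L - 1 : ℝ) / d))) /
        Real.sqrt (2 * π * d) := by
  have hL : 1 < L := by
    have := (ha.le_apply_nat le_rfl).trans (haL d le_rfl)
    omega
  have hL1 : (0 : ℝ) < L - 1 := by rw [sub_pos]; exact_mod_cast hL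
  set x : ℕ → ℝ := fun j => -Δ + (2 * (a j) / (L - 1 : ℝ)) * Δ
  set h := 2 * Δ / (L - 1 : ℝ) with h_def
  have hh : 0 < h := by positivity
  have hsep : ∀ i ≤ d, ∀ j ≤ d, h * |(i : ℝ) - j| ≤ |x i - x j| := by
    intro i hi j hj
    rw [show x i - x j = h * (a i - a j) by simp only [x, h_def]; ring, abs_mul, abs_of_pos hh]
    exact mul_le_mul_of_nonneg_left (ha.abs_natCast_sub_le hi hj) hh.le
  have hB : ∀ j ≤ d, |1 - x j| ≤ 1 + Δ := by
    intro j hj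
    have haj : (a j : ℝ) ≤ L - 1 :=
      (Nat.cast_le.2 (haL j hj)).trans_eq (Nat.cast_pred (by omega))
    exact abs_one_sub_neg_add_mul_le hΔ0.le (by positivity) ((div_le_iff₀ hL1).2 (by linarith))
  have hM : 2 * (1 + Δ) / h = (1 + 1 / Δ) * (L - 1 : ℝ) := by
    rw [h_def]
    field_simp
    ring
  calc |p.eval 1| ≤ ε * ((2 * (1 + Δ) / h) ^ d / d !) :=
        (abs_eval_le_of_abs_eval_nodes_le hd hh hsep hB hb).trans_eq (mul_div_assoc _ _ _)
    _ ≤ _ := by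
        rw [hM, mul_div_assoc]
        exact mul_le_mul_of_nonneg_left (pow_div_factorial_le_exp (by positivity) hd1)
          ((abs_nonneg _).trans (hb 0 (by omega)))

/-- Lagrange extrapolation bound with `d+1` nodes chosen from `L` equally-spaced
points in `[-Δ, Δ]`: if `p` has degree at most `d ≥ 1`, `L ≥ d+1`,
`0 ≤ a_0 < a_1 < ⋯ < a_d ≤ L-1` are integers, `x_j = -Δ + (2a_j/(L-1))Δ`, and
`|p(x_j)| ≤ ε` for all `j`, then
`|p(1)| ≤ ε·exp(d(1 + log((1+1/Δ)(L-1)/d)))/√(2πd)`. -/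
theorem lagrange_extrapolation_subset (p : Polynomial ℝ) (d L : ℕ) (ε Δ : ℝ)
    (a : ℕ → ℕ)
    (hd1 : 1 ≤ d) (hd : p.natDegree ≤ d) (hL : d + 1 ≤ L)
    (hΔ0 : 0 < Δ) (hΔ1 : Δ < 1)
    (ha : StrictMonoOn a (Set.Iic d)) (haL : ∀ j ≤ d, a j ≤ L - 1)
    (hb : ∀ j : ℕ, j ≤ d → |p.eval (-Δ + (2 * (a j) / (L - 1 : ℝ)) * Δ)| ≤ ε) :
    |p.eval 1| ≤
      ε * Real.exp (d * (1 + Real.log ((1 + 1 / Δ) * (L - 1 : ℝ) / d))) /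
        Real.sqrt (2 * π * d) :=
  lagrange_extrapolation_subset_general p d L ε Δ a hd1 hd hΔ0 ha haL hb
end
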